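/- arXiv:2502.01544 — 4 statements merged into one kernel-verified Lean document; each statement's English description precedes it below -/
import Mathlib

section
/- Let 𝓑 be a simple expansion set over X. Every simplex of the full-support complex Δ^f_𝓑 is contained in a cube: if distinct full-support vertices v₀,…,v_n with |v₀| < … < |v_n| span a simplex of Δ^f_𝓑, then there exist vertices v₂ ⊆ v₁ with |ℰ(b)| = 2 for all b ∈ v₂ such that {v₀,…,v_n} ⊆ 𝒞(v₁,v₂); indeed one may take v₁ = v₀ and v₂ = {b ∈ v₀ : r_b(v_n) = Bas(b)}. -/
/-!
Since `v₀` has full support and every `r_b(v_j)` lies in `ℰ(b)`, the supports of `r_b(v_j)` cover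
`supp b`, so disjointness within `v_j` gives `v_j = ⋃_{b ∈ v₀} r_b(v_j)`. Each `r_b(v_j)` is `{b}`
or `Bas(b)`, so `v_j = (v₀ - w) ∪ ⋃_{b ∈ w} Bas(b)` with `w = {b ∈ v₀ : r_b(v_j) ≠ {b}}`, and the
chain condition `r_b(v_j) ≤ r_b(v_n)` puts `w` inside `v₂`.
-/


structure SimpleExpansionSet (B : Type*) (X : Type*) where
  supp : B → Set X
  supp_nonempty : ∀ b, (supp b).Nonempty
  E : B → Set (Finset B)
  self_mem : ∀ b, ({b} : Finset B) ∈ E b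
  proper_unique : ∀ b : B, ∀ u ∈ E b, ∀ w ∈ E b, u ≠ {b} → w ≠ {b} → u = w
  proper_disjoint : ∀ b : B, ∀ v ∈ E b, v ≠ {b} →
    ∀ b₁ ∈ v, ∀ b₂ ∈ v, b₁ ≠ b₂ → Disjoint (supp b₁) (supp b₂)
  proper_supp : ∀ b : B, ∀ v ∈ E b, v ≠ {b} → (⋃ b' ∈ v, supp b') = supp b
  proper_card : ∀ b : B, ∀ v ∈ E b, v ≠ {b} → 2 ≤ v.card

namespace SimpleExpansionSet

variable {B X : Type*}

/-- A vertex: a finite subset of `𝓑` whose members have pairwise disjoint supports. -/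
def IsVertex (S : SimpleExpansionSet B X) (v : Finset B) : Prop :=
  ∀ b₁ ∈ v, ∀ b₂ ∈ v, b₁ ≠ b₂ → Disjoint (S.supp b₁) (S.supp b₂)

/-- The support of a vertex. -/
def vsupp (S : SimpleExpansionSet B X) (v : Finset B) : Set X :=
  ⋃ b ∈ v, S.supp b

/-- `|ℰ(b)| = 2`, i.e. `b` admits a proper expansion. -/
def HasExpansion (S : SimpleExpansionSet B X) (b : B) : Prop :=
  ∃ u ∈ S.E b, u ≠ {b}

/-- The contraction basin of `b`: the unique member of `ℰ(b) - {{b}}` (when it exists). -/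
noncomputable def Bas (S : SimpleExpansionSet B X) (b : B) : Finset B :=
  @dite _ (S.HasExpansion b) (Classical.propDecidable _) (fun h => h.choose) (fun _ => {b})

/-- The restriction `r_b(u) = {b' ∈ u : supp b' ⊆ supp b}`. -/
noncomputable def restrict (S : SimpleExpansionSet B X) (b : B) (u : Finset B) : Finset B :=
  @Finset.filter _ (fun b' => S.supp b' ⊆ S.supp b) (Classical.decPred _) u

/-- The partial order on `ℰ(b)`: `{b}` is below everything. -/
def Eleq (b : B) (u w : Finset B) : Prop := u = w ∨ u = {b}

/-- The cube `𝒞(v₁, v₂)`, as a set of vertices. -/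
noncomputable def cube [DecidableEq B] (S : SimpleExpansionSet B X) (v₁ v₂ : Finset B) :
    Set (Finset B) :=
  { u | ∃ w ⊆ v₂, u = (v₁ \ v₂) ∪ (v₂ \ w) ∪ w.biUnion S.Bas }

/-- One expansion step: replace `b ∈ u` by its contraction basin. -/
def Step [DecidableEq B] (S : SimpleExpansionSet B X) (u v : Finset B) : Prop :=
  ∃ b ∈ u, S.HasExpansion b ∧ v = u.erase b ∪ S.Bas b

/-- The ascending-path relation `⪯`. -/
def Prec [DecidableEq B] (S : SimpleExpansionSet B X) : Finset B → Finset B → Prop :=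
  Relation.ReflTransGen (S.Step)

/-- `u` is joined to `v` by a cubical edge with basin `Bsn` (relative to `v`). -/
def BasinOf [DecidableEq B] (S : SimpleExpansionSet B X) (v u Bsn : Finset B) : Prop :=
  (∃ b ∈ v, S.HasExpansion b ∧ u = v.erase b ∪ S.Bas b ∧ Bsn = {b}) ∨
  (∃ b ∈ u, S.HasExpansion b ∧ v = u.erase b ∪ S.Bas b ∧ Bsn = S.Bas b)

end SimpleExpansionSet

open SimpleExpansionSet

namespace SimpleExpansionSet

variable {B X : Type*} (S : SimpleExpansionSet B X)

lemma Bas_mem_E {b : B} (h : S.HasExpansion b) : S.Bas b ∈ S.E b ∧ S.Bas b ≠ {b} := by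
  rw [Bas, dif_pos h]
  exact h.choose_spec

lemma eq_Bas_of_mem_E {b : B} {u : Finset B} (hu : u ∈ S.E b) (hne : u ≠ {b}) :
    u = S.Bas b :=
  have h : S.HasExpansion b := ⟨u, hu, hne⟩
  S.proper_unique b _ hu _ (S.Bas_mem_E h).1 hne (S.Bas_mem_E h).2

lemma mem_restrict {b b' : B} {u : Finset B} :
    b' ∈ S.restrict b u ↔ b' ∈ u ∧ S.supp b' ⊆ S.supp b := by
  simp [restrict]

lemma restrict_subset (b : B) (u : Finset B) : S.restrict b u ⊆ u :=
  fun _ h => ((S.mem_restrict).mp h).1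

lemma vsupp_eq_supp_of_mem_E {b : B} {u : Finset B} (hu : u ∈ S.E b) : S.vsupp u = S.supp b := by
  by_cases hb : u = {b}
  · simp [vsupp, hb]
  · exact S.proper_supp b u hu hb

lemma IsVertex.eq_of_mem_supp {S : SimpleExpansionSet B X} {u : Finset B} (hu : S.IsVertex u)
    {b c : B} {x : X} (hb : b ∈ u) (hc : c ∈ u) (hxb : x ∈ S.supp b) (hxc : x ∈ S.supp c) :
    b = c := by
  by_contra hbc
  exact Set.disjoint_left.mp (hu b hb c hc hbc) hxb hxc

lemma exists_mem_restrict {v u : Finset B} (hv : S.vsupp v = Set.univ) (hu : S.IsVertex u)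
    (hE : ∀ b ∈ v, S.restrict b u ∈ S.E b) {b' : B} (hb' : b' ∈ u) :
    ∃ b ∈ v, b' ∈ S.restrict b u := by
  obtain ⟨x, hxb'⟩ := S.supp_nonempty b'
  have hxv : x ∈ S.vsupp v := hv ▸ Set.mem_univ x
  obtain ⟨b, hb, hxb⟩ := Set.mem_iUnion₂.mp hxv
  rw [← S.vsupp_eq_supp_of_mem_E (hE b hb)] at hxb
  obtain ⟨c, hc, hxc⟩ := Set.mem_iUnion₂.mp hxb
  rw [hu.eq_of_mem_supp hb' (S.restrict_subset b u hc) hxb' hxc]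
  exact ⟨b, hb, hc⟩

lemma biUnion_restrict_eq [DecidableEq B] {v u : Finset B} (hv : S.vsupp v = Set.univ)
    (hu : S.IsVertex u) (hE : ∀ b ∈ v, S.restrict b u ∈ S.E b) :
    v.biUnion (S.restrict · u) = u := by
  refine subset_antisymm (Finset.biUnion_subset.mpr fun b _ => S.restrict_subset b u) ?_
  intro b' hb'
  exact Finset.mem_biUnion.mpr (S.exists_mem_restrict hv hu hE hb')

lemma eq_sdiff_union_biUnion_Bas [DecidableEq B] {v u : Finset B} (hv : S.vsupp v = Set.univ)
    (hu : S.IsVertex u) (hE : ∀ b ∈ v, S.restrict b u ∈ S.E b) :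
    u = (v \ {b ∈ v | S.restrict b u ≠ {b}}) ∪
      {b ∈ v | S.restrict b u ≠ {b}}.biUnion S.Bas := by
  set w := {b ∈ v | S.restrict b u ≠ {b}}
  have hsplit : v = (v \ w) ∪ w := (Finset.sdiff_union_of_subset (Finset.filter_subset _ v)).symm
  have hfixed : ∀ b ∈ v \ w, S.restrict b u = {b} := by
    intro b hb
    simpa [w, (Finset.mem_sdiff.mp hb).1] using (Finset.mem_sdiff.mp hb).2
  have hexpanded : ∀ b ∈ w, S.restrict b u = S.Bas b := by
    intro b hb
    obtain ⟨hbv, hne⟩ := Finset.mem_filter.mp hb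
    exact S.eq_Bas_of_mem_E (hE b hbv) hne
  conv_lhs => rw [← S.biUnion_restrict_eq hv hu hE, hsplit, Finset.union_biUnion]
  rw [Finset.biUnion_congr rfl hfixed, Finset.biUnion_singleton_eq_self,
    Finset.biUnion_congr rfl hexpanded]

lemma sdiff_union_biUnion_Bas_mem_cube [DecidableEq B] {v₁ v₂ w : Finset B} (hw : w ⊆ v₂)
    (hv₂ : v₂ ⊆ v₁) : (v₁ \ w) ∪ w.biUnion S.Bas ∈ S.cube v₁ v₂ :=
  ⟨w, hw, by rw [Finset.sdiff_union_sdiff_cancel hv₂ hw]⟩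

end SimpleExpansionSet

theorem simplex_subset_cube_general {B X : Type*} [DecidableEq B] (S : SimpleExpansionSet B X)
    (n : ℕ) (v : Fin (n + 1) → Finset B)
    (hvert : ∀ j, S.IsVertex (v j)) (hfull : ∀ j, S.vsupp (v j) = Set.univ)
    (hchain : ∀ b ∈ v 0, S.restrict b (v 0) = {b} ∧
      (∀ j, S.restrict b (v j) ∈ S.E b) ∧
      (∀ j k : Fin (n + 1), j ≤ k → Eleq b (S.restrict b (v j)) (S.restrict b (v k)))) :
    ∃ v₂ ⊆ v 0, (∀ b ∈ v₂, S.HasExpansion b) ∧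
      (∀ b : B, b ∈ v₂ ↔ b ∈ v 0 ∧ S.HasExpansion b ∧
        S.restrict b (v (Fin.last n)) = S.Bas b) ∧
      ∀ j, v j ∈ S.cube (v 0) v₂ := by
  classical
  set v₂ := {b ∈ v 0 | S.HasExpansion b ∧ S.restrict b (v (Fin.last n)) = S.Bas b}
  have hv₂ : ∀ b, b ∈ v₂ ↔ b ∈ v 0 ∧ S.HasExpansion b ∧
      S.restrict b (v (Fin.last n)) = S.Bas b := fun b => Finset.mem_filter
  refine ⟨v₂, Finset.filter_subset _ _, fun b hb => ((hv₂ b).mp hb).2.1, hv₂, fun j => ?_⟩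
  have hE : ∀ b ∈ v 0, S.restrict b (v j) ∈ S.E b := fun b hb => (hchain b hb).2.1 j
  have hw : {b ∈ v 0 | S.restrict b (v j) ≠ {b}} ⊆ v₂ := by
    intro b hb
    obtain ⟨hb0, hne⟩ := Finset.mem_filter.mp hb
    have hlast : S.restrict b (v j) = S.restrict b (v (Fin.last n)) :=
      ((hchain b hb0).2.2 j (Fin.last n) (Fin.le_last j)).resolve_right hne
    exact (hv₂ b).mpr ⟨hb0, ⟨_, hE b hb0, hne⟩, hlast ▸ S.eq_Bas_of_mem_E (hE b hb0) hne⟩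
  rw [S.eq_sdiff_union_biUnion_Bas (hfull 0) (hvert j) hE]
  exact S.sdiff_union_biUnion_Bas_mem_cube hw (Finset.filter_subset _ _)

/-- every simplex of `Δ^f_𝓑` is contained in a cube; one may take
`v₁ = v₀` and `v₂ = {b ∈ v₀ : r_b(v_n) = Bas(b)}`. -/
theorem simplex_subset_cube {B X : Type*} [DecidableEq B] (S : SimpleExpansionSet B X)
    (n : ℕ) (v : Fin (n + 1) → Finset B)
    (hvert : ∀ j, S.IsVertex (v j)) (hfull : ∀ j, S.vsupp (v j) = Set.univ)
    (hcard : ∀ j k : Fin (n + 1), j < k → (v j).card < (v k).card)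
    (hchain : ∀ b ∈ v 0, S.restrict b (v 0) = {b} ∧
      (∀ j, S.restrict b (v j) ∈ S.E b) ∧
      (∀ j k : Fin (n + 1), j ≤ k → Eleq b (S.restrict b (v j)) (S.restrict b (v k)))) :
    ∃ v₂ ⊆ v 0, (∀ b ∈ v₂, S.HasExpansion b) ∧
      (∀ b : B, b ∈ v₂ ↔ b ∈ v 0 ∧ S.HasExpansion b ∧
        S.restrict b (v (Fin.last n)) = S.Bas b) ∧
      ∀ j, v j ∈ S.cube (v 0) v₂ :=
  simplex_subset_cube_general S n v hvert hfull hchain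
end

section
/- (Corners of a cube are distinct) Let 𝓑 be a simple expansion set over X, let v₂ ⊆ v₁ be vertices with |ℰ(b)| = 2 for every b ∈ v₂, and let w, w' ⊆ v₂. If (v₁ − v₂) ∪ (v₂ − w) ∪ ⋃_{b ∈ w} Bas(b) = (v₁ − v₂) ∪ (v₂ − w') ∪ ⋃_{b ∈ w'} Bas(b), then w = w'. In particular, the cube 𝒞(v₁,v₂) has exactly 2^{|v₂|} vertices. -/
/-!
Each `b ∈ v₂` lies in the corner indexed by `w` exactly when `b ∉ w`: an expanded `b` cannot
reappear inside any basin `Bas b'` with `b' ∈ v₁`, since members of `Bas b'` have supports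
inside `supp b'`, which is disjoint from `supp b` for `b' ≠ b`, while for `b' = b` some other
member of `Bas b` would have nonempty support both inside and disjoint from `supp b`. Hence
`w = v₂ \ corner w` is recovered from its corner.
-/

namespace SimpleExpansionSet

variable {B X : Type*} (S : SimpleExpansionSet B X) {b b' : B}

theorem Bas_mem_E_and_ne (h : S.HasExpansion b) : S.Bas b ∈ S.E b ∧ S.Bas b ≠ {b} := by
  rw [Bas, dif_pos h]
  exact h.choose_spec

theorem Bas_of_not_hasExpansion (h : ¬S.HasExpansion b) : S.Bas b = {b} := by
  rw [Bas, dif_neg h]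

theorem supp_subset_of_mem_Bas (h : b' ∈ S.Bas b) : S.supp b' ⊆ S.supp b := by
  by_cases hb : S.HasExpansion b
  · obtain ⟨hE, hne⟩ := S.Bas_mem_E_and_ne hb
    rw [← S.proper_supp b _ hE hne]
    exact Set.subset_biUnion_of_mem (u := S.supp) h
  · rw [S.Bas_of_not_hasExpansion hb, Finset.mem_singleton] at h
    rw [h]

theorem notMem_Bas_of_disjoint (h : Disjoint (S.supp b') (S.supp b)) : b' ∉ S.Bas b :=
  fun hmem => (S.supp_nonempty b').ne_empty
    (h.eq_bot_of_le (S.supp_subset_of_mem_Bas hmem))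

theorem self_notMem_Bas (h : S.HasExpansion b) : b ∉ S.Bas b := by
  intro hb
  obtain ⟨hE, hne⟩ := S.Bas_mem_E_and_ne h
  have hcard : 1 < (S.Bas b).card := S.proper_card b _ hE hne
  obtain ⟨b'', hb'', hb''b⟩ := Finset.exists_mem_ne hcard b
  exact S.notMem_Bas_of_disjoint (S.proper_disjoint b _ hE hne b'' hb'' b hb hb''b) hb''

variable [DecidableEq B]

noncomputable def cubeCorner (v₁ v₂ w : Finset B) : Finset B :=
  (v₁ \ v₂) ∪ (v₂ \ w) ∪ w.biUnion S.Bas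

theorem notMem_biUnion_Bas {v w : Finset B} (hv : S.IsVertex v) (hw : w ⊆ v)
    (hexp : ∀ b ∈ w, S.HasExpansion b) (hb : b ∈ v) : b ∉ w.biUnion S.Bas := by
  simp only [Finset.mem_biUnion, not_exists, not_and]
  intro b' hb'
  obtain rfl | hne := eq_or_ne b b'
  · exact S.self_notMem_Bas (hexp b hb')
  · exact S.notMem_Bas_of_disjoint (hv b hb b' (hw hb') hne)

theorem sdiff_cubeCorner {v₁ v₂ w : Finset B} (hv₁ : S.IsVertex v₁) (hsub : v₂ ⊆ v₁)
    (hw : w ⊆ v₂) (hexp : ∀ b ∈ w, S.HasExpansion b) : v₂ \ S.cubeCorner v₁ v₂ w = w := by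
  ext b
  have hBas := S.notMem_biUnion_Bas hv₁ (hw.trans hsub) hexp (b := b)
  simp only [cubeCorner, Finset.mem_sdiff, Finset.mem_union]
  constructor
  · rintro ⟨hb, hnot⟩
    by_contra hbw
    exact hnot (Or.inl (Or.inr ⟨hb, hbw⟩))
  · intro hbw
    refine ⟨hw hbw, ?_⟩
    rintro ((⟨-, hb⟩ | ⟨-, hb⟩) | hb)
    exacts [hb (hw hbw), hb hbw, hBas (hsub (hw hbw)) hb]

theorem cubeCorner_injOn {v₁ v₂ : Finset B} (hv₁ : S.IsVertex v₁) (hsub : v₂ ⊆ v₁)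
    (hexp : ∀ b ∈ v₂, S.HasExpansion b) :
    Set.InjOn (S.cubeCorner v₁ v₂) (v₂.powerset : Set (Finset B)) := by
  intro w hw w' hw' h
  rw [Finset.mem_coe, Finset.mem_powerset] at hw hw'
  rw [← S.sdiff_cubeCorner hv₁ hsub hw fun b hb => hexp b (hw hb), h,
    S.sdiff_cubeCorner hv₁ hsub hw' fun b hb => hexp b (hw' hb)]

theorem cube_eq_image (v₁ v₂ : Finset B) :
    S.cube v₁ v₂ = S.cubeCorner v₁ v₂ '' (v₂.powerset : Set (Finset B)) := by
  ext u
  simp only [cube, cubeCorner, Set.mem_ofPred_eq, Set.mem_image, Finset.mem_coe,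
    Finset.mem_powerset, eq_comm (a := u)]

end SimpleExpansionSet

open SimpleExpansionSet

/-- corners of a cube are distinct, and `𝒞(v₁,v₂)` has exactly `2^{|v₂|}`
vertices. -/
theorem cube_corners_distinct {B X : Type*} [DecidableEq B] (S : SimpleExpansionSet B X)
    (v₁ v₂ : Finset B) (hv₁ : S.IsVertex v₁) (hsub : v₂ ⊆ v₁)
    (hexp : ∀ b ∈ v₂, S.HasExpansion b) :
    (∀ w ⊆ v₂, ∀ w' ⊆ v₂,
      (v₁ \ v₂) ∪ (v₂ \ w) ∪ w.biUnion S.Bas = (v₁ \ v₂) ∪ (v₂ \ w') ∪ w'.biUnion S.Bas →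
      w = w') ∧
    (S.cube v₁ v₂).ncard = 2 ^ v₂.card := by
  have hinj := S.cubeCorner_injOn hv₁ hsub hexp
  refine ⟨fun w hw w' hw' h => hinj (by simpa using hw) (by simpa using hw') h, ?_⟩
  rw [S.cube_eq_image, hinj.ncard_image, Set.ncard_coe_finset, Finset.card_powerset]
end

section
/- (Intersection of cubes is a cube) Let 𝓑 be a simple expansion set over X and let 𝒞(v₁,v₂) and 𝒞(v₁',v₂') be cubes with 𝒞(v₁,v₂) ∩ 𝒞(v₁',v₂') ≠ ∅. Then there exist vertices v₄ ⊆ v₃ with |ℰ(b)| = 2 for every b ∈ v₄ such that 𝒞(v₁,v₂) ∩ 𝒞(v₁',v₂') = 𝒞(v₃,v₄). Moreover one may take v₃ = v̂ to be a vertex of minimal cardinality in the intersection, writing v̂ = (v₁ − ṽ₂) ∪ ⋃_{b ∈ ṽ₂} Bas(b) = (v₁' − ṽ₂') ∪ ⋃_{b' ∈ ṽ₂'} Bas(b') with ṽ₂ ⊆ v₂ and ṽ₂' ⊆ v₂', and v₄ = (v₂ − ṽ₂) ∩ (v₂' − ṽ₂'). -/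
/-!
Write the members of `𝒞(v₁, v₂)` as `E(w) = (v₁ − w) ∪ ⋃_{b ∈ w} Bas(b)` with `w ⊆ v₂`. The
parameter is recovered as `w = v₁ − E(w)`, and `|E(w)|` grows strictly with `w` because every
basin has at least two elements.

The key observation: if `c ∈ v₁` lies in one common vertex `x` of the two cubes but not in
another one `y`, then `c ∈ v₁'`. Otherwise `c` sits in a basin `Bas(b')` with `b' ∈ v₁'`, while
`c` is expanded in `y`; a point of an element of `Bas(c) ⊆ y` is then covered in `y` either by
`b'` or by an element of `Bas(b')`, contradicting `supp(d) ⊊ supp(c) ⊊ supp(b')`.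

Hence any two common vertices `E(w) = E'(w')` and `E(t) = E'(t')` have a common meet
`E(w ∩ t) = E'(w' ∩ t')` and the same difference `w − t = w' − t'`. Minimality of
`v̂ = E(ṽ₂)` forces `ṽ₂ ⊆ w` for every common vertex `E(w)`, which is therefore the expansion of
`v̂` along `w − ṽ₂ ⊆ (v₂ − ṽ₂) ∩ (v₂' − ṽ₂')`.
-/

namespace SimpleExpansionSet

variable {B X : Type*} {S : SimpleExpansionSet B X} {b b₁ b₂ c : B} {v : Finset B}

lemma bas_mem_E (hb : S.HasExpansion b) : S.Bas b ∈ S.E b := by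
  rw [Bas, dif_pos hb]
  exact hb.choose_spec.1

lemma bas_ne_singleton (hb : S.HasExpansion b) : S.Bas b ≠ {b} := by
  rw [Bas, dif_pos hb]
  exact hb.choose_spec.2

lemma isVertex_bas (hb : S.HasExpansion b) : S.IsVertex (S.Bas b) :=
  S.proper_disjoint b _ (bas_mem_E hb) (bas_ne_singleton hb)

lemma two_le_card_bas (hb : S.HasExpansion b) : 2 ≤ (S.Bas b).card :=
  S.proper_card b _ (bas_mem_E hb) (bas_ne_singleton hb)

lemma iUnion_supp_bas (hb : S.HasExpansion b) : ⋃ c ∈ S.Bas b, S.supp c = S.supp b :=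
  S.proper_supp b _ (bas_mem_E hb) (bas_ne_singleton hb)

lemma supp_subset_of_mem_bas (hb : S.HasExpansion b) (hc : c ∈ S.Bas b) :
    S.supp c ⊆ S.supp b :=
  iUnion_supp_bas hb ▸ Set.subset_biUnion_of_mem (u := S.supp) hc

lemma exists_mem_bas_of_mem_supp (hb : S.HasExpansion b) {p : X} (hp : p ∈ S.supp b) :
    ∃ e ∈ S.Bas b, p ∈ S.supp e := by
  rw [← iUnion_supp_bas hb] at hp
  simpa using hp

lemma IsVertex.eq_of_mem_supp_s6 (hv : S.IsVertex v) (hb₁ : b₁ ∈ v) (hb₂ : b₂ ∈ v) {p : X}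
    (hp₁ : p ∈ S.supp b₁) (hp₂ : p ∈ S.supp b₂) : b₁ = b₂ :=
  by_contra fun hne => Set.disjoint_left.1 (hv b₁ hb₁ b₂ hb₂ hne) hp₁ hp₂

lemma supp_ssubset_of_mem_bas (hb : S.HasExpansion b) (hc : c ∈ S.Bas b) :
    S.supp c ⊂ S.supp b := by
  refine (supp_subset_of_mem_bas hb hc).ssubset_of_ne fun heq => ?_
  obtain ⟨c', hc', hne⟩ := (S.Bas b).exists_mem_ne (two_le_card_bas hb) c
  obtain ⟨p, hp⟩ := S.supp_nonempty c'
  exact hne <| (isVertex_bas hb).eq_of_mem_supp_s6 hc' hc hp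
    (heq ▸ supp_subset_of_mem_bas hb hc' hp)

lemma IsVertex.notMem_of_mem_bas (hv : S.IsVertex v) (hb : b ∈ v) (hbe : S.HasExpansion b)
    (hc : c ∈ S.Bas b) : c ∉ v := fun hcv => by
  obtain ⟨p, hp⟩ := S.supp_nonempty c
  obtain rfl := hv.eq_of_mem_supp_s6 hcv hb hp (supp_subset_of_mem_bas hbe hc hp)
  exact (supp_ssubset_of_mem_bas hbe hc).ne rfl

/-- The pairs `(v₁, v₂)` for which the cube `𝒞(v₁, v₂)` is defined. -/
structure IsCubePair (S : SimpleExpansionSet B X) (v₁ v₂ : Finset B) : Prop where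
  isVertex : S.IsVertex v₁
  subset : v₂ ⊆ v₁
  hasExpansion : ∀ b ∈ v₂, S.HasExpansion b

namespace IsCubePair

variable {v₁ v₂ : Finset B} (h : S.IsCubePair v₁ v₂)
include h

lemma eq_of_mem_bas (hb₁ : b₁ ∈ v₂) (hb₂ : b₂ ∈ v₂) (hc₁ : c ∈ S.Bas b₁)
    (hc₂ : c ∈ S.Bas b₂) : b₁ = b₂ := by
  obtain ⟨p, hp⟩ := S.supp_nonempty c
  exact h.isVertex.eq_of_mem_supp_s6 (h.subset hb₁) (h.subset hb₂)
    (supp_subset_of_mem_bas (h.hasExpansion _ hb₁) hc₁ hp)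
    (supp_subset_of_mem_bas (h.hasExpansion _ hb₂) hc₂ hp)

lemma notMem_of_mem_bas (hb : b ∈ v₂) (hc : c ∈ S.Bas b) : c ∉ v₁ :=
  h.isVertex.notMem_of_mem_bas (h.subset hb) (h.hasExpansion b hb) hc

end IsCubePair

variable [DecidableEq B]

noncomputable def expand (S : SimpleExpansionSet B X) (v w : Finset B) : Finset B :=
  (v \ w) ∪ w.biUnion S.Bas

lemma mem_expand {w : Finset B} :
    c ∈ S.expand v w ↔ c ∈ v ∧ c ∉ w ∨ ∃ b ∈ w, c ∈ S.Bas b := by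
  simp [expand]

lemma mem_expand_of_mem_bas {w : Finset B} (hb : b ∈ w) (hc : c ∈ S.Bas b) :
    c ∈ S.expand v w :=
  mem_expand.2 (Or.inr ⟨b, hb, hc⟩)

lemma mem_cube_iff {v₁ v₂ u : Finset B} (h : v₂ ⊆ v₁) :
    u ∈ S.cube v₁ v₂ ↔ ∃ w ⊆ v₂, u = S.expand v₁ w := by
  refine exists_congr fun w => and_congr_right fun hw => ?_
  rw [expand, Finset.sdiff_union_sdiff_cancel h hw]

namespace IsCubePair

variable {v₁ v₂ w t s : Finset B} (h : S.IsCubePair v₁ v₂)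
include h

lemma mem_expand_iff_notMem (hw : w ⊆ v₂) (hc : c ∈ v₁) : c ∈ S.expand v₁ w ↔ c ∉ w := by
  rw [mem_expand, or_iff_left fun ⟨b, hb, hcb⟩ => h.notMem_of_mem_bas (hw hb) hcb hc]
  exact and_iff_right hc

lemma sdiff_subset_expand : v₂ \ t ⊆ S.expand v₁ t :=
  (Finset.sdiff_subset_sdiff h.subset subset_rfl).trans Finset.subset_union_left

lemma sdiff_eq_inter_sdiff_expand (hw : w ⊆ v₂) (ht : t ⊆ v₂) :
    w \ t = v₁ ∩ (S.expand v₁ t \ S.expand v₁ w) := by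
  ext c
  by_cases hc : c ∈ v₁
  · simp only [Finset.mem_sdiff, Finset.mem_inter, h.mem_expand_iff_notMem ht hc,
      h.mem_expand_iff_notMem hw hc, hc, true_and, not_not]
    exact and_comm
  · simp only [Finset.mem_sdiff, Finset.mem_inter, hc, false_and, iff_false, not_and]
    exact fun hcw => absurd (h.subset (hw hcw)) hc

lemma isVertex_expand (hw : w ⊆ v₂) : S.IsVertex (S.expand v₁ w) := by
  have hbase : ∀ c ∈ S.expand v₁ w, ∃ b ∈ v₁, S.supp c ⊆ S.supp b ∧
      (c = b ∧ b ∉ w ∨ b ∈ w ∧ c ∈ S.Bas b) := by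
    intro c hc
    rcases mem_expand.1 hc with ⟨hcv, hcw⟩ | ⟨b, hb, hcb⟩
    · exact ⟨c, hcv, subset_rfl, Or.inl ⟨rfl, hcw⟩⟩
    · exact ⟨b, h.subset (hw hb), supp_subset_of_mem_bas (h.hasExpansion b (hw hb)) hcb,
        Or.inr ⟨hb, hcb⟩⟩
  intro c₁ hc₁ c₂ hc₂ hne
  refine Set.disjoint_left.2 fun p hp₁ hp₂ => hne ?_
  obtain ⟨b₁, hb₁, hs₁, hk₁⟩ := hbase c₁ hc₁
  obtain ⟨b₂, hb₂, hs₂, hk₂⟩ := hbase c₂ hc₂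
  obtain rfl := h.isVertex.eq_of_mem_supp_s6 hb₁ hb₂ (hs₁ hp₁) (hs₂ hp₂)
  rcases hk₁ with ⟨rfl, hb⟩ | ⟨hb, hcb₁⟩ <;> rcases hk₂ with ⟨rfl, hb'⟩ | ⟨hb', hcb₂⟩
  · rfl
  · exact absurd hb' hb
  · exact absurd hb hb'
  · exact (isVertex_bas (h.hasExpansion _ (hw hb))).eq_of_mem_supp_s6 hcb₁ hcb₂ hp₁ hp₂

lemma card_expand (hw : w ⊆ v₂) :
    (S.expand v₁ w).card + w.card = v₁.card + ∑ b ∈ w, (S.Bas b).card := by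
  have hdisj : Disjoint (v₁ \ w) (w.biUnion S.Bas) := Finset.disjoint_left.2 fun c hc hc' => by
    obtain ⟨b, hb, hcb⟩ := Finset.mem_biUnion.1 hc'
    exact h.notMem_of_mem_bas (hw hb) hcb (Finset.mem_sdiff.1 hc).1
  have hbas : (w.biUnion S.Bas).card = ∑ b ∈ w, (S.Bas b).card :=
    Finset.card_biUnion fun b₁ hb₁ b₂ hb₂ hne => Finset.disjoint_left.2 fun _ hc₁ hc₂ =>
      hne (h.eq_of_mem_bas (hw hb₁) (hw hb₂) hc₁ hc₂)
  rw [expand, Finset.card_union_of_disjoint hdisj, hbas,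
    Finset.card_sdiff_of_subset (hw.trans h.subset)]
  have := Finset.card_le_card (hw.trans h.subset)
  omega

lemma card_expand_add_card_sdiff_le (hst : s ⊆ t) (ht : t ⊆ v₂) :
    (S.expand v₁ s).card + (t \ s).card ≤ (S.expand v₁ t).card := by
  have hs := h.card_expand (hst.trans ht)
  have ht' := h.card_expand ht
  have hsum := Finset.sum_sdiff hst (f := fun b => (S.Bas b).card)
  have hcard := Finset.card_sdiff_add_card_eq_card hst
  have hle : (t \ s).card • 2 ≤ ∑ b ∈ t \ s, (S.Bas b).card :=
    Finset.card_nsmul_le_sum _ _ _ fun b hb =>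
      two_le_card_bas (h.hasExpansion b (ht (Finset.mem_sdiff.1 hb).1))
  rw [smul_eq_mul] at hle
  omega

lemma expand_expand (ht : t ⊆ v₂) (hs : s ⊆ v₂) :
    S.expand (S.expand v₁ t) s = S.expand v₁ (t ∪ s) := by
  ext c
  simp only [mem_expand, Finset.mem_union]
  by_cases hc : c ∈ v₁
  · have hbas : ∀ b ∈ v₂, c ∉ S.Bas b := fun b hb hcb => h.notMem_of_mem_bas hb hcb hc
    have hs' : ∀ b ∈ s, c ∉ S.Bas b := fun b hb => hbas b (hs hb)
    have ht' : ∀ b ∈ t, c ∉ S.Bas b := fun b hb => hbas b (ht hb)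
    grind
  · have hcs : c ∉ s := fun hcs => hc (h.subset (hs hcs))
    grind

lemma expand_inter (hw : w ⊆ v₂) (ht : t ⊆ v₂) :
    S.expand v₁ (w ∩ t) = (S.expand v₁ w ∩ S.expand v₁ t) ∪
      (v₁ ∩ (S.expand v₁ w \ S.expand v₁ t)) ∪ (v₁ ∩ (S.expand v₁ t \ S.expand v₁ w)) := by
  ext c
  by_cases hc : c ∈ v₁
  · simp only [Finset.mem_union, Finset.mem_inter, Finset.mem_sdiff, hc, true_and,
      h.mem_expand_iff_notMem hw hc, h.mem_expand_iff_notMem ht hc,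
      h.mem_expand_iff_notMem (Finset.inter_subset_left.trans hw) hc]
    tauto
  · have hbas : ∀ b₁ ∈ w, ∀ b₂ ∈ t, c ∈ S.Bas b₁ → c ∈ S.Bas b₂ → b₁ = b₂ :=
      fun b₁ hb₁ b₂ hb₂ => h.eq_of_mem_bas (hw hb₁) (ht hb₂)
    simp only [Finset.mem_union, Finset.mem_inter, Finset.mem_sdiff, mem_expand, hc,
      false_and, false_or, or_false]
    grind

lemma cube_expand_subset_cube {r : Finset B} (ht : t ⊆ v₂) (hr : r ⊆ v₂ \ t) :
    S.cube (S.expand v₁ t) r ⊆ S.cube v₁ v₂ := by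
  intro u hu
  obtain ⟨s, hs, rfl⟩ := (mem_cube_iff (hr.trans h.sdiff_subset_expand)).1 hu
  have hs₂ : s ⊆ v₂ := hs.trans (hr.trans Finset.sdiff_subset)
  rw [h.expand_expand ht hs₂]
  exact (mem_cube_iff h.subset).2 ⟨t ∪ s, Finset.union_subset ht hs₂, rfl⟩

end IsCubePair

section TwoCubes

variable {v₁ v₂ v₁' v₂' : Finset B} (h : S.IsCubePair v₁ v₂) (h' : S.IsCubePair v₁' v₂')
include h h'

lemma inter_sdiff_subset {x y : Finset B} (hx : x ∈ S.cube v₁' v₂')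
    (hy : y ∈ S.cube v₁ v₂ ∩ S.cube v₁' v₂') : v₁ ∩ (x \ y) ⊆ v₁' := by
  intro c hc
  obtain ⟨hcv, hcx, hcy⟩ : c ∈ v₁ ∧ c ∈ x ∧ c ∉ y := by simpa using hc
  obtain ⟨t, ht, rfl⟩ := (mem_cube_iff h.subset).1 hy.1
  obtain ⟨t', ht', hy'⟩ := (mem_cube_iff h'.subset).1 hy.2
  obtain ⟨w', hw', rfl⟩ := (mem_cube_iff h'.subset).1 hx
  by_contra hcv'
  obtain ⟨b', hb', hcb'⟩ : ∃ b' ∈ w', c ∈ S.Bas b' := by simpa [mem_expand, hcv'] using hcx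
  have hct : c ∈ t := of_not_not fun hct => hcy ((h.mem_expand_iff_notMem ht hcv).2 hct)
  have hce := h.hasExpansion c (ht hct)
  have hb'e := h'.hasExpansion b' (hw' hb')
  obtain ⟨d, hd⟩ := Finset.card_pos.1 (two_pos.trans_le (two_le_card_bas hce))
  obtain ⟨p, hp⟩ := S.supp_nonempty d
  have hdc := supp_ssubset_of_mem_bas hce hd
  have hcb := supp_ssubset_of_mem_bas hb'e hcb'
  have hdy : d ∈ S.expand v₁' t' := hy' ▸ mem_expand_of_mem_bas hct hd
  have hvy := h'.isVertex_expand ht'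
  by_cases hb't : b' ∈ t'
  · obtain ⟨e, he, hpe⟩ := exists_mem_bas_of_mem_supp hb'e (hcb.subset (hdc.subset hp))
    obtain rfl := hvy.eq_of_mem_supp_s6 hdy (mem_expand_of_mem_bas hb't he) hp hpe
    obtain rfl := (isVertex_bas hb'e).eq_of_mem_supp_s6 he hcb' hp (hdc.subset hp)
    exact hdc.ne rfl
  · have hb'y : b' ∈ S.expand v₁' t' := mem_expand.2 (Or.inl ⟨h'.subset (hw' hb'), hb't⟩)
    obtain rfl := hvy.eq_of_mem_supp_s6 hdy hb'y hp (hcb.subset (hdc.subset hp))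
    exact (hdc.trans hcb).ne rfl

lemma inter_sdiff_eq {x y : Finset B} (hx : x ∈ S.cube v₁ v₂ ∩ S.cube v₁' v₂')
    (hy : y ∈ S.cube v₁ v₂ ∩ S.cube v₁' v₂') : v₁ ∩ (x \ y) = v₁' ∩ (x \ y) :=
  subset_antisymm
    (Finset.subset_inter (inter_sdiff_subset h h' hx.2 hy) Finset.inter_subset_right)
    (Finset.subset_inter (inter_sdiff_subset h' h hx.1 ⟨hy.2, hy.1⟩) Finset.inter_subset_right)

lemma expand_inter_eq {w t w' t' : Finset B} (hw : w ⊆ v₂) (ht : t ⊆ v₂) (hw' : w' ⊆ v₂')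
    (ht' : t' ⊆ v₂') (hx : S.expand v₁ w = S.expand v₁' w')
    (hy : S.expand v₁ t = S.expand v₁' t') :
    S.expand v₁ (w ∩ t) = S.expand v₁' (w' ∩ t') := by
  have hx₂ : S.expand v₁ w ∈ S.cube v₁ v₂ ∩ S.cube v₁' v₂' :=
    ⟨(mem_cube_iff h.subset).2 ⟨w, hw, rfl⟩, (mem_cube_iff h'.subset).2 ⟨w', hw', hx⟩⟩
  have hy₂ : S.expand v₁ t ∈ S.cube v₁ v₂ ∩ S.cube v₁' v₂' :=
    ⟨(mem_cube_iff h.subset).2 ⟨t, ht, rfl⟩, (mem_cube_iff h'.subset).2 ⟨t', ht', hy⟩⟩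
  rw [h.expand_inter hw ht, h'.expand_inter hw' ht', inter_sdiff_eq h h' hx₂ hy₂,
    inter_sdiff_eq h h' hy₂ hx₂, hx, hy]

lemma inter_cube_subset_cube_expand {t t' : Finset B} (ht : t ⊆ v₂) (ht' : t' ⊆ v₂')
    (hrep : S.expand v₁ t = S.expand v₁' t')
    (hmin : ∀ u ∈ S.cube v₁ v₂ ∩ S.cube v₁' v₂', (S.expand v₁ t).card ≤ u.card) :
    S.cube v₁ v₂ ∩ S.cube v₁' v₂' ⊆ S.cube (S.expand v₁ t) ((v₂ \ t) ∩ (v₂' \ t')) := by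
  have hvhat : S.expand v₁ t ∈ S.cube v₁ v₂ ∩ S.cube v₁' v₂' :=
    ⟨(mem_cube_iff h.subset).2 ⟨t, ht, rfl⟩, (mem_cube_iff h'.subset).2 ⟨t', ht', hrep⟩⟩
  intro u hu
  obtain ⟨w, hw, rfl⟩ := (mem_cube_iff h.subset).1 hu.1
  obtain ⟨w', hw', hww'⟩ := (mem_cube_iff h'.subset).1 hu.2
  have hmeet : S.expand v₁ (w ∩ t) ∈ S.cube v₁ v₂ ∩ S.cube v₁' v₂' :=
    ⟨(mem_cube_iff h.subset).2 ⟨w ∩ t, Finset.inter_subset_left.trans hw, rfl⟩,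
      (mem_cube_iff h'.subset).2 ⟨w' ∩ t', Finset.inter_subset_left.trans hw',
        expand_inter_eq h h' hw ht hw' ht' hww' hrep⟩⟩
  have htw : t ⊆ w := by
    have hgrow := h.card_expand_add_card_sdiff_le (Finset.inter_subset_right (s₁ := w)) ht
    have hcard := hmin _ hmeet
    rw [← Finset.sdiff_eq_empty_iff_subset, ← Finset.sdiff_inter_self_right,
      ← Finset.card_eq_zero]
    omega
  have hres : w \ t = w' \ t' := calc
    w \ t = v₁ ∩ (S.expand v₁ t \ S.expand v₁ w) := h.sdiff_eq_inter_sdiff_expand hw ht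
    _ = v₁' ∩ (S.expand v₁ t \ S.expand v₁ w) := inter_sdiff_eq h h' hvhat hu
    _ = v₁' ∩ (S.expand v₁' t' \ S.expand v₁' w') := by rw [hrep, hww']
    _ = w' \ t' := (h'.sdiff_eq_inter_sdiff_expand hw' ht').symm
  refine (mem_cube_iff (Finset.inter_subset_left.trans h.sdiff_subset_expand)).2
    ⟨w \ t, Finset.subset_inter (Finset.sdiff_subset_sdiff hw subset_rfl) ?_, ?_⟩
  · exact hres ▸ Finset.sdiff_subset_sdiff hw' subset_rfl
  · rw [h.expand_expand ht (Finset.sdiff_subset.trans hw), Finset.union_sdiff_of_subset htw]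

lemma inter_cube_eq_cube_expand {t t' : Finset B} (ht : t ⊆ v₂) (ht' : t' ⊆ v₂')
    (hrep : S.expand v₁ t = S.expand v₁' t')
    (hmin : ∀ u ∈ S.cube v₁ v₂ ∩ S.cube v₁' v₂', (S.expand v₁ t).card ≤ u.card) :
    S.cube v₁ v₂ ∩ S.cube v₁' v₂' = S.cube (S.expand v₁ t) ((v₂ \ t) ∩ (v₂' \ t')) :=
  subset_antisymm (inter_cube_subset_cube_expand h h' ht ht' hrep hmin) <|
    Set.subset_inter (h.cube_expand_subset_cube ht Finset.inter_subset_left)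
      (hrep ▸ h'.cube_expand_subset_cube ht' Finset.inter_subset_right)

end TwoCubes

end SimpleExpansionSet

open SimpleExpansionSet

theorem cube_inter_cube_general {B X : Type*} [DecidableEq B] (S : SimpleExpansionSet B X)
    (v₁ v₂ v₁' v₂' : Finset B)
    (hv₁ : S.IsVertex v₁) (hv₁' : S.IsVertex v₁')
    (hsub : v₂ ⊆ v₁) (hsub' : v₂' ⊆ v₁')
    (hexp : ∀ b ∈ v₂, S.HasExpansion b) (hexp' : ∀ b ∈ v₂', S.HasExpansion b)
    (vhat tv₂ tv₂' : Finset B)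
    (hmin : ∀ u ∈ S.cube v₁ v₂ ∩ S.cube v₁' v₂', vhat.card ≤ u.card)
    (htv : tv₂ ⊆ v₂) (htv' : tv₂' ⊆ v₂')
    (hrep : vhat = (v₁ \ tv₂) ∪ tv₂.biUnion S.Bas)
    (hrep' : vhat = (v₁' \ tv₂') ∪ tv₂'.biUnion S.Bas) :
    (∃ v₃ v₄ : Finset B, v₄ ⊆ v₃ ∧ S.IsVertex v₃ ∧ (∀ b ∈ v₄, S.HasExpansion b) ∧
      S.cube v₁ v₂ ∩ S.cube v₁' v₂' = S.cube v₃ v₄) ∧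
    S.cube v₁ v₂ ∩ S.cube v₁' v₂' = S.cube vhat ((v₂ \ tv₂) ∩ (v₂' \ tv₂')) := by
  have h : S.IsCubePair v₁ v₂ := ⟨hv₁, hsub, hexp⟩
  have h' : S.IsCubePair v₁' v₂' := ⟨hv₁', hsub', hexp'⟩
  obtain rfl : vhat = S.expand v₁ tv₂ := hrep
  have key := inter_cube_eq_cube_expand h h' htv htv' hrep' hmin
  refine ⟨⟨_, _, Finset.inter_subset_left.trans h.sdiff_subset_expand,
    h.isVertex_expand htv, fun b hb => hexp b ?_, key⟩, key⟩
  exact (Finset.mem_sdiff.1 (Finset.mem_inter.1 hb).1).1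

/-- a nonempty intersection of cubes is a cube; one may take the minimal
vertex `v̂` and `v₄ = (v₂ − ṽ₂) ∩ (v₂' − ṽ₂')`. -/
theorem cube_inter_cube {B X : Type*} [DecidableEq B] (S : SimpleExpansionSet B X)
    (v₁ v₂ v₁' v₂' : Finset B)
    (hv₁ : S.IsVertex v₁) (hv₁' : S.IsVertex v₁')
    (hsub : v₂ ⊆ v₁) (hsub' : v₂' ⊆ v₁')
    (hexp : ∀ b ∈ v₂, S.HasExpansion b) (hexp' : ∀ b ∈ v₂', S.HasExpansion b)
    (vhat tv₂ tv₂' : Finset B)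
    (hvhat : vhat ∈ S.cube v₁ v₂ ∩ S.cube v₁' v₂')
    (hmin : ∀ u ∈ S.cube v₁ v₂ ∩ S.cube v₁' v₂', vhat.card ≤ u.card)
    (htv : tv₂ ⊆ v₂) (htv' : tv₂' ⊆ v₂')
    (hrep : vhat = (v₁ \ tv₂) ∪ tv₂.biUnion S.Bas)
    (hrep' : vhat = (v₁' \ tv₂') ∪ tv₂'.biUnion S.Bas) :
    (∃ v₃ v₄ : Finset B, v₄ ⊆ v₃ ∧ S.IsVertex v₃ ∧ (∀ b ∈ v₄, S.HasExpansion b) ∧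
      S.cube v₁ v₂ ∩ S.cube v₁' v₂' = S.cube v₃ v₄) ∧
    S.cube v₁ v₂ ∩ S.cube v₁' v₂' = S.cube vhat ((v₂ \ tv₂) ∩ (v₂' \ tv₂')) :=
  cube_inter_cube_general S v₁ v₂ v₁' v₂' hv₁ hv₁' hsub hsub' hexp hexp' vhat tv₂ tv₂' hmin htv htv'
    hrep hrep'
end

section
/- (Link condition) Let 𝓑 be a simple expansion set over X, let v be a full-support vertex, and let v₁,…,v_m be pairwise distinct full-support vertices, each joined to v by a cubical edge, such that for every pair i ≠ j the vertices v, v_i, v_j all lie in a common 2-dimensional cube 𝒞(v',v''). Then there exist vertices u₂ ⊆ u₁ with |ℰ(b)| = 2 for every b ∈ u₂ such that the cube 𝒞(u₁,u₂) contains v, v₁, …, v_m among its vertices. -/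
open SimpleExpansionSet

namespace SimpleExpansionSet

variable {B X : Type*} (S : SimpleExpansionSet B X)

lemma bas_mem {b : B} (h : S.HasExpansion b) :
    S.Bas b ∈ S.E b ∧ S.Bas b ≠ ({b} : Finset B) := by
  rw [Bas, dif_pos h]
  exact ⟨h.choose_spec.1, h.choose_spec.2⟩

lemma supp_bas_subset {b d : B} (h : S.HasExpansion b) (hd : d ∈ S.Bas b) :
    S.supp d ⊆ S.supp b := by
  have hs := S.proper_supp b (S.Bas b) (S.bas_mem h).1 (S.bas_mem h).2
  rw [← hs]
  exact Set.subset_iUnion₂ (s := fun i' (_ : i' ∈ S.Bas b) => S.supp i') d hd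

lemma bas_disj {b d e : B} (h : S.HasExpansion b) (hd : d ∈ S.Bas b) (he : e ∈ S.Bas b)
    (hde : d ≠ e) : Disjoint (S.supp d) (S.supp e) :=
  S.proper_disjoint b (S.Bas b) (S.bas_mem h).1 (S.bas_mem h).2 d hd e he hde

lemma disjoint_absurd {d c : B} (h1 : S.supp d ⊆ S.supp c)
    (h2 : Disjoint (S.supp d) (S.supp c)) : False := by
  obtain ⟨x, hx⟩ := S.supp_nonempty d
  exact Set.disjoint_left.mp h2 hx (h1 hx)

lemma bas_card {b : B} (h : S.HasExpansion b) : 2 ≤ (S.Bas b).card :=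
  S.proper_card b (S.Bas b) (S.bas_mem h).1 (S.bas_mem h).2

lemma bas_nonempty {b : B} (h : S.HasExpansion b) : (S.Bas b).Nonempty :=
  Finset.card_pos.mp (by have := S.bas_card h; omega)

lemma bas_not_supersupp {b c : B} (h : S.HasExpansion b) (hc : c ∈ S.Bas b)
    (hs : S.supp b ⊆ S.supp c) : False := by
  obtain ⟨e, he, hec⟩ := Finset.exists_mem_ne (s := S.Bas b) (by have := S.bas_card h; omega) c
  exact S.disjoint_absurd ((S.supp_bas_subset h he).trans hs) (S.bas_disj h he hc hec)

lemma notMem_bas {b : B} (h : S.HasExpansion b) : b ∉ S.Bas b :=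
  fun hb => S.bas_not_supersupp h hb subset_rfl

lemma disjoint_supp_right {b : B} (h : S.HasExpansion b) {A : Set X}
    (hd : ∀ d ∈ S.Bas b, Disjoint A (S.supp d)) : Disjoint A (S.supp b) := by
  rw [← S.proper_supp b (S.Bas b) (S.bas_mem h).1 (S.bas_mem h).2]
  simp only [Set.disjoint_iUnion_right]
  exact hd

lemma up_normal [DecidableEq B] {u vv : Finset B} {b : B} (hu : S.IsVertex u) (hb : S.HasExpansion b)
    (hbu : b ∈ u) (hveq : vv = u.erase b ∪ S.Bas b) :
    b ∉ vv ∧ S.Bas b ⊆ vv ∧ u = (vv \ S.Bas b) ∪ {b} := by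
  have hnb := S.notMem_bas hb
  have key : ∀ c ∈ u, c ≠ b → c ∉ S.Bas b := by
    intro c hc hcb hcB
    exact S.disjoint_absurd (S.supp_bas_subset hb hcB) (hu c hc b hbu hcb)
  refine ⟨?_, ?_, ?_⟩
  · rw [hveq]
    simp [Finset.mem_union, Finset.mem_erase, hnb]
  · rw [hveq]
    exact Finset.subset_union_right
  · ext c
    simp only [hveq, Finset.mem_union, Finset.mem_sdiff, Finset.mem_erase, Finset.mem_singleton]
    constructor
    · intro hcu
      by_cases hcb : c = b
      · exact Or.inr hcb
      · exact Or.inl ⟨Or.inl ⟨hcb, hcu⟩, key c hcu hcb⟩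
    · rintro (⟨(⟨hcb, hcu⟩ | hcB), hnB⟩ | rfl)
      · exact hcu
      · exact absurd hcB hnB
      · exact hbu

lemma toggle_mem [DecidableEq B] {v' v'' vv u : Finset B} {b : B}
    (hv' : S.IsVertex v') (hsub : v'' ⊆ v') (hexp : ∀ c ∈ v'', S.HasExpansion c)
    (hvc : vv ∈ S.cube v' v'') (huc : u ∈ S.cube v' v'')
    (hb : S.HasExpansion b) (hbu : b ∈ u) (hbv : b ∉ vv) (hBas : S.Bas b ⊆ vv) :
    b ∈ v'' := by
  obtain ⟨wv, hwv, hveq⟩ := hvc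
  obtain ⟨wu, hwu, hueq⟩ := huc
  have hAv : v' \ v'' ⊆ vv := by
    rw [hveq]
    exact Finset.subset_union_left.trans Finset.subset_union_left
  rw [hueq] at hbu
  rcases Finset.mem_union.mp hbu with h1 | h3
  · rcases Finset.mem_union.mp h1 with hA | h2
    · exact absurd (hAv hA) hbv
    · exact (Finset.mem_sdiff.mp h2).1
  · obtain ⟨cc, hcwu, hbc⟩ := Finset.mem_biUnion.mp h3
    have hcv'' : cc ∈ v'' := hwu hcwu
    have hsuppb : S.supp b ⊆ S.supp cc := S.supp_bas_subset (hexp cc hcv'') hbc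
    obtain ⟨d, hd⟩ := S.bas_nonempty hb
    have hdv : d ∈ vv := hBas hd
    have hdsupp : S.supp d ⊆ S.supp cc := (S.supp_bas_subset hb hd).trans hsuppb
    rw [hveq] at hdv
    exfalso
    rcases Finset.mem_union.mp hdv with h1' | h3'
    · rcases Finset.mem_union.mp h1' with hA | h2'
      · obtain ⟨hdv', hdnv''⟩ := Finset.mem_sdiff.mp hA
        exact S.disjoint_absurd hdsupp
          (hv' d hdv' cc (hsub hcv'') (fun h => hdnv'' (h ▸ hcv'')))
      · obtain ⟨hdv'', -⟩ := Finset.mem_sdiff.mp h2'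
        by_cases hdc : d = cc
        · subst hdc
          exact S.bas_not_supersupp hb hd hsuppb
        · exact S.disjoint_absurd hdsupp (hv' d (hsub hdv'') cc (hsub hcv'') hdc)
    · obtain ⟨c', hc'wv, hdc'⟩ := Finset.mem_biUnion.mp h3'
      have hc'v'' : c' ∈ v'' := hwv hc'wv
      by_cases hcc : c' = cc
      · subst hcc
        have hdb : d ≠ b := fun h => S.notMem_bas hb (h ▸ hd)
        exact S.disjoint_absurd (S.supp_bas_subset hb hd)
          (S.bas_disj (hexp c' hc'v'') hdc' hbc hdb)
      · exact S.disjoint_absurd hdsupp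
          (Disjoint.mono_left (S.supp_bas_subset (hexp c' hc'v'') hdc')
            (hv' c' (hsub hc'v'') cc (hsub hcv'') hcc))

end SimpleExpansionSet


set_option maxHeartbeats 2000000 in
/-- Link condition: pairwise 2-cube-compatible neighbours of `v` span a
cube together with `v`. -/
theorem link_condition {B X : Type*} [DecidableEq B] (S : SimpleExpansionSet B X)
    (v : Finset B) (hv : S.IsVertex v) (hvfull : S.vsupp v = Set.univ)
    (m : ℕ) (vs : Fin m → Finset B)
    (hdist : ∀ i j, i ≠ j → vs i ≠ vs j)
    (hvert : ∀ i, S.IsVertex (vs i)) (hfull : ∀ i, S.vsupp (vs i) = Set.univ)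
    (hedge : ∀ i, ∃ Bsn : Finset B, S.BasinOf v (vs i) Bsn)
    (h2cube : ∀ i j, i ≠ j → ∃ v' v'' : Finset B, S.IsVertex v' ∧ v'' ⊆ v' ∧
      (∀ b ∈ v'', S.HasExpansion b) ∧ v''.card = 2 ∧
      v ∈ S.cube v' v'' ∧ vs i ∈ S.cube v' v'' ∧ vs j ∈ S.cube v' v'') :
    ∃ u₁ u₂ : Finset B, u₂ ⊆ u₁ ∧ S.IsVertex u₁ ∧ (∀ b ∈ u₂, S.HasExpansion b) ∧
      v ∈ S.cube u₁ u₂ ∧ ∀ i, vs i ∈ S.cube u₁ u₂ := by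
  classical
  have hdata : ∀ i, ∃ (d : Bool) (b : B), S.HasExpansion b ∧
      (d = true → b ∈ v ∧ b ∉ vs i ∧ S.Bas b ⊆ vs i ∧ vs i = (v \ {b}) ∪ S.Bas b) ∧
      (d = false → b ∉ v ∧ S.Bas b ⊆ v ∧ vs i = (v \ S.Bas b) ∪ {b}) := by
    intro i
    obtain ⟨Bsn, hB⟩ := hedge i
    rcases hB with ⟨b, hbv, hexp, heq, -⟩ | ⟨b, hbu, hexp, heq, -⟩
    · have hnb := S.notMem_bas hexp
      refine ⟨true, b, hexp, fun _ => ⟨hbv, ?_, ?_, ?_⟩, by simp⟩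
      · rw [heq]
        simp [Finset.mem_union, Finset.mem_erase, hnb]
      · rw [heq]
        exact Finset.subset_union_right
      · rw [heq, Finset.erase_eq]
    · obtain ⟨h1, h2, h3⟩ := S.up_normal (hvert i) hexp hbu heq
      exact ⟨false, b, hexp, by simp, fun _ => ⟨h1, h2, h3⟩⟩
  choose dir t hexpt hdw hup using hdata
  -- distinctness of the toggled elements
  have hne : ∀ i j, i ≠ j → t i ≠ t j := by
    intro i j hij heq
    cases hdi : dir i <;> cases hdj : dir j
    · exact hdist i j hij (by rw [(hup i hdi).2.2, (hup j hdj).2.2, heq])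
    · exact (hup i hdi).1 (heq ▸ (hdw j hdj).1)
    · exact (hup j hdj).1 (heq ▸ (hdw i hdi).1)
    · exact hdist i j hij (by rw [(hdw i hdi).2.2.2, (hdw j hdj).2.2.2, heq])
  -- pairwise disjoint supports
  have hdisj : ∀ i j, i ≠ j → Disjoint (S.supp (t i)) (S.supp (t j)) := by
    intro i j hij
    obtain ⟨v', v'', hv', hsub, hexp'', -, hvC, hiC, hjC⟩ := h2cube i j hij
    have key : ∀ k, vs k ∈ S.cube v' v'' → t k ∈ v'' := by
      intro k hkC
      cases hdk : dir k
      · obtain ⟨h1, h2, h3⟩ := hup k hdk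
        exact S.toggle_mem hv' hsub hexp'' hvC hkC (hexpt k)
          (by rw [h3]; simp) h1 h2
      · obtain ⟨h1, h2, h3, -⟩ := hdw k hdk
        exact S.toggle_mem hv' hsub hexp'' hkC hvC (hexpt k) h1 h2 h3
    exact hv' (t i) (hsub (key i hiC)) (t j) (hsub (key j hjC)) (hne i j hij)
  obtain ⟨U, hU⟩ : ∃ U : Finset B, U = (Finset.univ.filter fun i => dir i = false).image t :=
    ⟨_, rfl⟩
  obtain ⟨D, hD⟩ : ∃ D : Finset B, D = (Finset.univ.filter fun i => dir i = true).image t :=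
    ⟨_, rfl⟩
  obtain ⟨BU, hBU⟩ : ∃ BU : Finset B, BU = U.biUnion S.Bas := ⟨_, rfl⟩
  have hmemU : ∀ c, c ∈ U ↔ ∃ i, dir i = false ∧ t i = c := by
    intro c
    rw [hU]
    simp [Finset.mem_image, Finset.mem_filter]
  have hmemD : ∀ c, c ∈ D ↔ ∃ i, dir i = true ∧ t i = c := by
    intro c
    rw [hD]
    simp [Finset.mem_image, Finset.mem_filter]
  have hmemBU : ∀ c, c ∈ BU ↔ ∃ i, dir i = false ∧ c ∈ S.Bas (t i) := by
    intro c
    rw [hBU]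
    simp only [Finset.mem_biUnion]
    constructor
    · rintro ⟨x, hxU, hcx⟩
      obtain ⟨i, hdi, rfl⟩ := (hmemU x).mp hxU
      exact ⟨i, hdi, hcx⟩
    · rintro ⟨i, hdi, hc⟩
      exact ⟨t i, (hmemU _).mpr ⟨i, hdi, rfl⟩, hc⟩
  have fUv : ∀ c, c ∈ U → c ∉ v := by
    intro c hc
    obtain ⟨i, hdi, rfl⟩ := (hmemU c).mp hc
    exact (hup i hdi).1
  have fBUv : ∀ c, c ∈ BU → c ∈ v := by
    intro c hc
    obtain ⟨i, hdi, hcB⟩ := (hmemBU c).mp hc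
    exact (hup i hdi).2.1 hcB
  have fDv : ∀ c, c ∈ D → c ∈ v := by
    intro c hc
    obtain ⟨i, hdi, rfl⟩ := (hmemD c).mp hc
    exact (hdw i hdi).1
  have fDU : ∀ c, c ∈ D → c ∉ U := fun c hc hcU => fUv c hcU (fDv c hc)
  have fDBU : ∀ c, c ∈ D → c ∉ BU := by
    intro c hcD hcBU
    obtain ⟨j, hdj, rfl⟩ := (hmemD c).mp hcD
    obtain ⟨i, hdi, hcB⟩ := (hmemBU _).mp hcBU
    have hij : j ≠ i := fun h => by rw [h, hdi] at hdj; exact Bool.noConfusion hdj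
    exact S.disjoint_absurd (S.supp_bas_subset (hexpt i) hcB) (hdisj j i hij)
  have fBasBU : ∀ i, dir i = false → ∀ c ∈ S.Bas (t i), c ∈ BU :=
    fun i hdi c hc => (hmemBU c).mpr ⟨i, hdi, hc⟩
  have fBasBas : ∀ i j, dir i = false → dir j = false → t i ≠ t j →
      ∀ c ∈ S.Bas (t i), c ∉ S.Bas (t j) := by
    intro i j hdi hdj hij c h1 h2
    have hijne : i ≠ j := fun h => hij (by rw [h])
    exact S.disjoint_absurd (S.supp_bas_subset (hexpt j) h2)
      (Disjoint.mono_left (S.supp_bas_subset (hexpt i) h1) (hdisj i j hijne))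
  refine ⟨(v \ BU) ∪ U, D ∪ U, ?_, ?_, ?_, ?_, ?_⟩
  · -- u₂ ⊆ u₁
    intro c hc
    rcases Finset.mem_union.mp hc with h | h
    · exact Finset.mem_union_left _ (Finset.mem_sdiff.mpr ⟨fDv c h, fDBU c h⟩)
    · exact Finset.mem_union_right _ h
  · -- IsVertex u₁
    have hvU : ∀ e ∈ v \ BU, ∀ c ∈ U, Disjoint (S.supp e) (S.supp c) := by
      intro e he c hc
      obtain ⟨i, hdi, rfl⟩ := (hmemU c).mp hc
      apply S.disjoint_supp_right (hexpt i)
      intro d hd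
      have hdBU : d ∈ BU := fBasBU i hdi d hd
      have hed : e ≠ d := fun h => (Finset.mem_sdiff.mp he).2 (h ▸ hdBU)
      exact hv e (Finset.mem_sdiff.mp he).1 d (fBUv d hdBU) hed
    intro b₁ h₁ b₂ h₂ hb₁₂
    rcases Finset.mem_union.mp h₁ with h₁' | h₁' <;>
      rcases Finset.mem_union.mp h₂ with h₂' | h₂'
    · exact hv b₁ (Finset.mem_sdiff.mp h₁').1 b₂ (Finset.mem_sdiff.mp h₂').1 hb₁₂
    · exact hvU b₁ h₁' b₂ h₂'
    · exact (hvU b₂ h₂' b₁ h₁').symm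
    · obtain ⟨i, hdi, rfl⟩ := (hmemU b₁).mp h₁'
      obtain ⟨j, hdj, rfl⟩ := (hmemU b₂).mp h₂'
      exact hdisj i j (fun h => hb₁₂ (by rw [h]))
  · -- expansions on u₂
    intro b hb
    rcases Finset.mem_union.mp hb with h | h
    · obtain ⟨i, -, rfl⟩ := (hmemD b).mp h
      exact hexpt i
    · obtain ⟨i, -, rfl⟩ := (hmemU b).mp h
      exact hexpt i
  · -- v ∈ cube
    refine ⟨U, Finset.subset_union_right, ?_⟩
    rw [← hBU]
    ext c
    simp only [Finset.mem_union, Finset.mem_sdiff]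
    constructor
    · intro hcv
      by_cases hBU' : c ∈ BU
      · exact Or.inr hBU'
      · by_cases hD' : c ∈ D
        · exact Or.inl (Or.inr ⟨Or.inl hD', fDU c hD'⟩)
        · exact Or.inl (Or.inl ⟨Or.inl ⟨hcv, hBU'⟩,
            fun h => h.elim hD' (fun hU' => fUv c hU' hcv)⟩)
    · rintro ((⟨hc1, hc2⟩ | ⟨hc2, hcU⟩) | hc3)
      · rcases hc1 with ⟨hcv, -⟩ | hcU2
        · exact hcv
        · exact absurd (Or.inr hcU2) hc2
      · rcases hc2 with hD' | hU'
        · exact fDv c hD'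
        · exact absurd hU' hcU
      · exact fBUv c hc3
  · -- vs i ∈ cube
    intro i
    have p1 := fBUv
    cases hdi : dir i
    · -- up neighbour
      obtain ⟨h1, h2, h3⟩ := hup i hdi
      have htU : t i ∈ U := (hmemU _).mpr ⟨i, hdi, rfl⟩
      have hbw : ∀ c, c ∈ (U.erase (t i)).biUnion S.Bas ↔ (c ∈ BU ∧ c ∉ S.Bas (t i)) := by
        intro c
        simp only [Finset.mem_biUnion, Finset.mem_erase]
        constructor
        · rintro ⟨x, ⟨hxt, hxU⟩, hcx⟩
          obtain ⟨j, hdj, rfl⟩ := (hmemU x).mp hxU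
          exact ⟨(hmemBU c).mpr ⟨j, hdj, hcx⟩, fBasBas j i hdj hdi hxt c hcx⟩
        · rintro ⟨hcBU, hcB⟩
          obtain ⟨j, hdj, hcx⟩ := (hmemBU c).mp hcBU
          exact ⟨t j, ⟨fun h => hcB (h ▸ hcx), (hmemU _).mpr ⟨j, hdj, rfl⟩⟩, hcx⟩
      refine ⟨U.erase (t i), (Finset.erase_subset _ _).trans Finset.subset_union_right, ?_⟩
      rw [h3]
      ext c
      simp only [Finset.mem_union, Finset.mem_sdiff, Finset.mem_singleton, Finset.mem_erase,
        hbw c]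
      have q7 : c ∈ S.Bas (t i) → c ∈ BU := fBasBU i hdi c
      constructor
      · rintro (⟨hcv, hcB⟩ | rfl)
        · by_cases hBU' : c ∈ BU
          · exact Or.inr ⟨hBU', hcB⟩
          · by_cases hD' : c ∈ D
            · exact Or.inl (Or.inr ⟨Or.inl hD', fun hh => fDU c hD' hh.2⟩)
            · exact Or.inl (Or.inl ⟨Or.inl ⟨hcv, hBU'⟩,
                fun h => h.elim hD' (fun hU' => fUv c hU' hcv)⟩)
        · exact Or.inl (Or.inr ⟨Or.inr htU, fun hh => hh.1 rfl⟩)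
      · rintro ((⟨hc1, hc2⟩ | ⟨hc2, hc3⟩) | ⟨hcBU, hcB⟩)
        · rcases hc1 with ⟨hcv, hBU'⟩ | hcU2
          · exact Or.inl ⟨hcv, fun h => hBU' (q7 h)⟩
          · exact absurd (Or.inr hcU2) hc2
        · by_cases hct : c = t i
          · exact Or.inr hct
          · rcases hc2 with hD' | hU'
            · exact Or.inl ⟨fDv c hD', fun h => fDBU c hD' (q7 h)⟩
            · exact absurd ⟨hct, hU'⟩ hc3
        · exact Or.inl ⟨fBUv c hcBU, hcB⟩
    · -- down neighbour
      obtain ⟨h1, h2, h3, h4⟩ := hdw i hdi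
      have htD : t i ∈ D := (hmemD _).mpr ⟨i, hdi, rfl⟩
      have hbw2 : ∀ c, c ∈ (U ∪ {t i}).biUnion S.Bas ↔ (c ∈ BU ∨ c ∈ S.Bas (t i)) := by
        intro c
        simp only [Finset.mem_biUnion, Finset.mem_union, Finset.mem_singleton]
        constructor
        · rintro ⟨x, hx | rfl, hcx⟩
          · exact Or.inl ((hBU ▸ Finset.mem_biUnion.mpr ⟨x, hx, hcx⟩))
          · exact Or.inr hcx
        · rintro (hcBU | hcB)
          · obtain ⟨j, hdj, hcx⟩ := (hmemBU c).mp hcBU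
            exact ⟨t j, Or.inl ((hmemU _).mpr ⟨j, hdj, rfl⟩), hcx⟩
          · exact ⟨t i, Or.inr rfl, hcB⟩
      refine ⟨U ∪ {t i}, ?_, ?_⟩
      · intro c hc
        rcases Finset.mem_union.mp hc with h | h
        · exact Finset.mem_union_right _ h
        · exact Finset.mem_union_left _ (Finset.mem_singleton.mp h ▸ htD)
      · rw [h4]
        ext c
        simp only [Finset.mem_union, Finset.mem_sdiff, Finset.mem_singleton, hbw2 c]
        have q6 : c = t i → c ∈ D := fun h => h ▸ htD
        constructor
        · rintro (⟨hcv, hct⟩ | hcB)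
          · by_cases hBU' : c ∈ BU
            · exact Or.inr (Or.inl hBU')
            · by_cases hD' : c ∈ D
              · exact Or.inl (Or.inr ⟨Or.inl hD', fun h => h.elim (fDU c hD') hct⟩)
              · exact Or.inl (Or.inl ⟨Or.inl ⟨hcv, hBU'⟩,
                  fun h => h.elim hD' (fun hU' => fUv c hU' hcv)⟩)
          · exact Or.inr (Or.inr hcB)
        · rintro ((⟨hc1, hc2⟩ | ⟨hc2, hc3⟩) | hBU' | hcB)
          · rcases hc1 with ⟨hcv, -⟩ | hcU2
            · exact Or.inl ⟨hcv, fun h => hc2 (Or.inl (q6 h))⟩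
            · exact absurd (Or.inr hcU2) hc2
          · rcases hc2 with hD' | hU'
            · exact Or.inl ⟨fDv c hD', fun h => hc3 (Or.inr h)⟩
            · exact absurd (Or.inl hU') hc3
          · exact Or.inl ⟨fBUv c hBU', fun h => fDBU c (q6 h) hBU'⟩
          · exact Or.inr hcB
end
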